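/- arXiv:2301.06053 — 3 statements merged into one kernel-verified Lean document; each statement's English description precedes it below -/
import Mathlib

section
/- Let p be a prime. For μ, λ in F_{p^2}, denote by [·] the Teichmüller lift to the Witt vectors W(F_{p^2}) = Z_{p^2}. Then [μ] + [λ] ≡ [μ+λ] - p·[P(μ,λ)] modulo p^2, where P(X,Y) = Σ_{s=1}^{p-1} (binom(p,s)/p) X^{(p-s)/p} Y^{s/p} is evaluated using the inverse of Frobenius (i.e., the exponents (p-s)/p and s/p denote taking p-th roots in F_{p^2}). -/
open WittVector

section Aux

variable {p : ℕ} [hp : Fact p.Prime]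

private lemma binom_aux {R : Type*} [CommRing R] (x y : R) :
    x ^ p + y ^ p - (x + y) ^ p
      = (p : R) * -∑ s ∈ Finset.Ico 1 p, ((p.choose s / p : ℕ) : R) * x ^ (p - s) * y ^ s := by
  have hpos : 0 < p := hp.out.pos
  have hre : (∑ s ∈ Finset.Ico 1 p, x ^ s * y ^ (p - s) * (p.choose s : R))
      = ∑ s ∈ Finset.Ico 1 p, (p : R) * (((p.choose s / p : ℕ) : R) * x ^ (p - s) * y ^ s) := by
    have := Finset.sum_Ico_reflect (fun j => x ^ j * y ^ (p - j) * (p.choose j : R)) 1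
      (m := p) (n := p) (by omega)
    rw [show p + 1 - p = 1 from by omega, show p + 1 - 1 = p from by omega] at this
    rw [← this]
    refine Finset.sum_congr rfl fun s hs => ?_
    simp only [Finset.mem_Ico] at hs
    have h1 : p - (p - s) = s := by omega
    have h2 : p.choose (p - s) = p.choose s := Nat.choose_symm (by omega)
    have h3 : (p.choose s : R) = (p : R) * ((p.choose s / p : ℕ) : R) := by
      rw [← Nat.cast_mul, Nat.mul_div_cancel' (hp.out.dvd_choose_self (by omega) hs.2)]
    show x ^ (p - s) * y ^ (p - (p - s)) * (p.choose (p - s) : R)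
        = (p : R) * (((p.choose s / p : ℕ) : R) * x ^ (p - s) * y ^ s)
    rw [h1, h2, h3]; ring
  rw [add_pow, Finset.sum_range_succ, Finset.range_eq_Ico,
    Finset.sum_eq_sum_Ico_succ_bot hpos, hre, ← Finset.mul_sum]
  simp [Nat.sub_self]
  ring

private lemma teich_coeff_one {k : Type*} [CommRing k] (μ lam : k) :
    (teichmuller p μ + teichmuller p lam - teichmuller p (μ + lam)).coeff 1
      = -∑ s ∈ Finset.Ico 1 p, ((p.choose s / p : ℕ) : k) * μ ^ (p - s) * lam ^ s := by
  classical
  let f : MvPolynomial (Fin 2) ℤ →+* k := (MvPolynomial.aeval ![μ, lam]).toRingHom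
  have hf0 : f (MvPolynomial.X 0) = μ := by simp [f, MvPolynomial.aeval_X, Matrix.cons_val_zero]
  have hf1 : f (MvPolynomial.X 1) = lam := by simp [f, MvPolynomial.aeval_X, Matrix.cons_val_one, Matrix.head_cons]
  set G : WittVector p (MvPolynomial (Fin 2) ℤ) := teichmuller p (MvPolynomial.X 0) + teichmuller p (MvPolynomial.X 1)
      - teichmuller p (MvPolynomial.X 0 + MvPolynomial.X 1) with hG
  have h0 : G.coeff 0 = 0 := by
    have : constantCoeff G = 0 := by
      rw [hG, map_sub, map_add]
      simp [constantCoeff_apply, teichmuller_coeff_zero]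
    simpa [constantCoeff_apply] using this
  have hW : ghostComponent 1 G = G.coeff 0 ^ p + (p : MvPolynomial (Fin 2) ℤ) * G.coeff 1 := by
    rw [ghostComponent_apply, wittPolynomial_one]
    simp [add_comm]
  have hT : ghostComponent 1 G
      = MvPolynomial.X 0 ^ p + MvPolynomial.X 1 ^ p
        - (MvPolynomial.X 0 + MvPolynomial.X 1) ^ p := by
    rw [hG, map_sub, map_add]
    simp [ghostComponent_teichmuller]
  have key : (p : MvPolynomial (Fin 2) ℤ) * G.coeff 1
      = (p : MvPolynomial (Fin 2) ℤ) * -∑ s ∈ Finset.Ico 1 p,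
          ((p.choose s / p : ℕ) : MvPolynomial (Fin 2) ℤ) * MvPolynomial.X 0 ^ (p - s) * MvPolynomial.X 1 ^ s := by
    rw [← binom_aux, ← hT, hW, h0, zero_pow hp.out.ne_zero, zero_add]
  have hpne : (p : MvPolynomial (Fin 2) ℤ) ≠ 0 := by
    exact_mod_cast Nat.cast_ne_zero.mpr hp.out.ne_zero
  have hcoeff1 : G.coeff 1
      = -∑ s ∈ Finset.Ico 1 p,
          ((p.choose s / p : ℕ) : MvPolynomial (Fin 2) ℤ) * MvPolynomial.X 0 ^ (p - s) * MvPolynomial.X 1 ^ s :=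
    mul_left_cancel₀ hpne key
  have hf2 : f (MvPolynomial.X 0 + MvPolynomial.X 1) = μ + lam := by
    rw [map_add, hf0, hf1]
  have hGk : WittVector.map f G
      = teichmuller p μ + teichmuller p lam - teichmuller p (μ + lam) := by
    rw [hG, map_sub, map_add, map_teichmuller, map_teichmuller, map_teichmuller, hf0, hf1, hf2]
  rw [← hGk, map_coeff, hcoeff1]
  push_cast [map_neg, map_sum, map_mul, map_pow, hf0, hf1]
  simp [map_natCast]

end Aux

/-
STATEMENT 1: For `μ, λ ∈ F_{p²}` with Teichmüller lifts `[·]` in the Witt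
vectors `W(F_{p²}) = Z_{p²}`, we have
`[μ] + [λ] ≡ [μ + λ] - p·[P(μ,λ)]  (mod p²)`,
where `P(X,Y) = ∑_{s=1}^{p-1} (C(p,s)/p) X^{(p-s)/p} Y^{s/p}` and the
exponents `(p-s)/p`, `s/p` denote taking `p`-th roots (inverse Frobenius)
in the perfect field `F_{p²}`. -/
theorem stmt1 (p : ℕ) [Fact p.Prime] (μ lam : GaloisField p 2) :
    (p : WittVector p (GaloisField p 2)) ^ 2 ∣
      (teichmuller p μ + teichmuller p lam
        - (teichmuller p (μ + lam)
            - p * teichmuller p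
                (∑ s ∈ Finset.Ico 1 p,
                  ((p.choose s / p : ℕ) : GaloisField p 2) *
                    ((frobeniusEquiv (GaloisField p 2) p).symm μ) ^ (p - s) *
                    ((frobeniusEquiv (GaloisField p 2) p).symm lam) ^ s))) := by
  classical
  set P : GaloisField p 2 := ∑ s ∈ Finset.Ico 1 p,
      ((p.choose s / p : ℕ) : GaloisField p 2) *
        ((frobeniusEquiv (GaloisField p 2) p).symm μ) ^ (p - s) *
        ((frobeniusEquiv (GaloisField p 2) p).symm lam) ^ s with hP
  have hPp : P ^ p = ∑ s ∈ Finset.Ico 1 p,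
      ((p.choose s / p : ℕ) : GaloisField p 2) * μ ^ (p - s) * lam ^ s := by
    have : P ^ p = _root_.frobenius (GaloisField p 2) p P := rfl
    rw [this, hP, map_sum]
    refine Finset.sum_congr rfl fun s hs => ?_
    rw [map_mul, map_mul, map_pow, map_pow, map_natCast,
      frobenius_apply_frobeniusEquiv_symm, frobenius_apply_frobeniusEquiv_symm]
  set G : WittVector p (GaloisField p 2) := teichmuller p μ + teichmuller p lam - teichmuller p (μ + lam)
    with hG
  have hG0 : G.coeff 0 = 0 := by
    have : constantCoeff G = 0 := by
      rw [hG, map_sub, map_add]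
      simp [constantCoeff_apply, teichmuller_coeff_zero]
    simpa [constantCoeff_apply] using this
  have hG1 : G.coeff 1 = -(P ^ p) := by
    rw [hG, teich_coeff_one, hPp]
  set D : WittVector p (GaloisField p 2) := teichmuller p μ + teichmuller p lam
      - (teichmuller p (μ + lam) - p * teichmuller p P) with hD
  have hDG : D = G + p * teichmuller p P := by rw [hD, hG]; ring
  have hVG : G = verschiebung (G.shift 1) := by
    have := WittVector.eq_iterate_verschiebung (x := G) (n := 1) (fun i hi => by
      interval_cases i; exact hG0)
    simpa using this
  have hpT : (p : WittVector p (GaloisField p 2)) * teichmuller p P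
      = verschiebung (frobenius (teichmuller p P)) := by
    rw [verschiebung_frobenius, mul_comm]
  have hDV : D = verschiebung (G.shift 1 + frobenius (teichmuller p P)) := by
    rw [map_add, ← hVG, ← hpT, hDG]
  have hD0 : D.coeff 0 = 0 := by rw [hDV, verschiebung_coeff_zero]
  have hD1 : D.coeff 1 = 0 := by
    rw [hDV, verschiebung_coeff_succ, add_coeff_zero, shift_coeff,
      coeff_frobenius_charP, teichmuller_coeff_zero]
    rw [show (1:ℕ) + 0 = 1 from rfl]
    rw [hG1]
    ring
  -- now conclude divisibility
  have hall : ∀ i < 2, D.coeff i = 0 := by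
    intro i hi; interval_cases i
    · exact hD0
    · exact hD1
  have hDV2 : D = verschiebung (verschiebung (D.shift 2)) := by
    have := WittVector.eq_iterate_verschiebung (x := D) (n := 2) hall
    simpa [Function.iterate_succ, Function.comp] using this
  obtain ⟨b, hb⟩ := (frobenius_bijective p (GaloisField p 2)).surjective (D.shift 2)
  obtain ⟨c, hc⟩ := (frobenius_bijective p (GaloisField p 2)).surjective b
  have : D = c * p ^ 2 := by
    rw [hDV2, ← hb, ← hc, verschiebung_frobenius, ← map_natCast (WittVector.frobenius (p := p) (R := GaloisField p 2)) p,
      verschiebung_mul_frobenius, verschiebung_frobenius, map_natCast]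
    ring
  exact ⟨c, by rw [this]; ring⟩
end

section
/- Let F be a field of characteristic not 2, and let g be the 3-dimensional Heisenberg-type Lie algebra over F with basis y, z, h and relations [y,z] = h, [y,h] = 0, [z,h] = 0. Let U(g) be its universal enveloping algebra, and let a be the left ideal of U(g) generated by y^2 and z. Then U(g)/a is 3-dimensional over F, spanned by the images of 1, y, and zy. -/
/-!
The left ideal `a` together with `span {1, y, zy}` is stable under left multiplication by
`y`, `z` and `h`, which generate `U(g)` as an algebra; since it contains `1`, it is all of
`U(g)`, so the three images span.  The only membership needing care is `yzy ∈ a`: the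
relation `[y, h] = 0` gives `2 yzy = y²z + zy²`, and this is where `char F ≠ 2` is used.

For independence, `y ↦ E₁₀`, `z ↦ E₂₁`, `h ↦ -E₂₀` is a representation of `g` on `F³`.
The map `u ↦ u • e₀` kills `y²` and `z`, hence `a`, and sends `1, y, zy` to `e₀, e₁, e₂`.
-/

open scoped Matrix

attribute [local instance] LieRing.ofAssociativeRing

section LeftMultiplication

variable {R A : Type*} [CommSemiring R] [Semiring A] [Algebra R A]

theorem Submodule.eq_top_of_one_mem_of_mul_mem {W : Submodule R A} {S : Set A}
    (hS : Algebra.adjoin R S = ⊤) (h1 : 1 ∈ W) (hmul : ∀ g ∈ S, ∀ w ∈ W, g * w ∈ W) :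
    W = ⊤ := by
  refine eq_top_iff'.mpr fun u => ?_
  have hu : u ∈ Algebra.adjoin R S := hS ▸ Algebra.mem_top
  suffices ∀ w ∈ W, u * w ∈ W by simpa using this 1 h1
  induction hu using Algebra.adjoin_induction with
  | mem g hg => exact hmul g hg
  | algebraMap r => exact fun w hw => by simpa [← Algebra.smul_def] using W.smul_mem r hw
  | add u v _ _ hu hv => exact fun w hw => by simpa [add_mul] using W.add_mem (hu w hw) (hv w hw)
  | mul u v _ _ hu hv => exact fun w hw => by simpa [mul_assoc] using hu _ (hv w hw)

theorem Submodule.mul_mem_restrictScalars_sup_span (I : Submodule A A) {T : Set A} {g : A}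
    (hg : ∀ x ∈ T, g * x ∈ I.restrictScalars R ⊔ span R T) :
    ∀ w ∈ I.restrictScalars R ⊔ span R T, g * w ∈ I.restrictScalars R ⊔ span R T := by
  intro w hw
  obtain ⟨u, hu, v, hv, rfl⟩ := mem_sup.mp hw
  clear hw
  rw [mul_add]
  refine add_mem (mem_sup_left (I.smul_mem g hu)) ?_
  induction hv using span_induction with
  | mem x hx => exact hg x hx
  | zero => simp
  | add x x' _ _ hx hx' => simpa [mul_add] using add_mem hx hx'
  | smul c x _ hx => simpa using smul_mem _ c hx

end LeftMultiplication

section Quotient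

variable {R A : Type*} [CommRing R] [Ring A] [Algebra R A]

theorem Submodule.span_image_mk_eq_top {I : Submodule A A} {T : Set A}
    (h : I.restrictScalars R ⊔ span R T = ⊤) :
    span R (Quotient.mk (p := I) '' T) = ⊤ := by
  refine eq_top_iff'.mpr fun q => ?_
  obtain ⟨u, rfl⟩ := Quotient.mk_surjective I q
  obtain ⟨a, ha, v, hv, rfl⟩ := mem_sup.mp (h ▸ mem_top : u ∈ I.restrictScalars R ⊔ span R T)
  rw [Quotient.mk_add, (Quotient.mk_eq_zero I).mpr ha, zero_add]
  exact apply_mem_span_image_of_mem_span (I.mkQ.restrictScalars R) hv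

theorem Submodule.linearIndependent_mk_of_mulVec {ι n : Type*} [Fintype n] [DecidableEq n]
    (φ : A →ₐ[R] Matrix n n R) (v : n → R) {S : Set A} (hS : ∀ x ∈ S, φ x *ᵥ v = 0)
    {u : ι → A} (hu : LinearIndependent R fun i => φ (u i) *ᵥ v) :
    LinearIndependent R fun i => Quotient.mk (p := span A S) (u i) := by
  let ψ : A →ₗ[R] n → R := (Matrix.mulVecBilin R R).flip v ∘ₗ φ.toLinearMap
  have hker : (span A S).restrictScalars R ≤ LinearMap.ker ψ := by
    intro x hx
    induction hx using span_induction with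
    | mem x hx => exact hS x hx
    | zero => simp
    | add x x' _ _ hx hx' => simp_all [ψ]
    | smul c x _ hx => simp_all [ψ]
  let ψbar := ((span A S).restrictScalars R).liftQ ψ hker ∘ₗ
    (Quotient.restrictScalarsEquiv R (span A S)).symm.toLinearMap
  exact LinearIndependent.of_comp ψbar hu

end Quotient

theorem LinearMap.map_lie_of_basis {ι R L M : Type*} [CommRing R] [LieRing L] [LieAlgebra R L]
    [LieRing M] [LieAlgebra R M] (b : Module.Basis ι R L) (f : L →ₗ[R] M)
    (h : ∀ i j, f ⁅b i, b j⁆ = ⁅f (b i), f (b j)⁆) (x y : L) : f ⁅x, y⁆ = ⁅f x, f y⁆ := by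
  have key : (LieModule.toEnd R L L : L →ₗ[R] Module.End R L).compr₂ f =
      (LieModule.toEnd R M M : M →ₗ[R] Module.End R M).compl₁₂ f f :=
    LinearMap.ext_basis b b fun i j => by simpa using h i j
  simpa using LinearMap.congr_fun₂ key x y

namespace UniversalEnvelopingAlgebra

variable {R L : Type*} [CommRing R] [LieRing L] [LieAlgebra R L]

variable (R L) in
theorem adjoin_range_ι :
    Algebra.adjoin R (Set.range (ι R : L → UniversalEnvelopingAlgebra R L)) = ⊤ := by
  have hι : (ι R : L → UniversalEnvelopingAlgebra R L) = mkAlgHom R L ∘ TensorAlgebra.ι R := by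
    funext x; exact ι_apply R x
  rw [hι, Set.range_comp, Algebra.adjoin_image, TensorAlgebra.adjoin_range_ι, Algebra.map_top,
    AlgHom.range_eq_top]
  exact RingCon.mkₐ_surjective (α := R) _

theorem adjoin_image_ι {s : Set L} (hs : Submodule.span R s = ⊤) :
    Algebra.adjoin R (ι R '' s) = ⊤ := by
  rw [← Algebra.adjoin_span, ← LieHom.coe_toLinearMap, ← Submodule.map_span, hs, Submodule.map_top]
  exact adjoin_range_ι R L

end UniversalEnvelopingAlgebra

namespace Heisenberg

section Ring

variable {A : Type*} [Ring A] {y z h : A}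

theorem y_mul_z_mul_y_mem (hyz : y * z - z * y = h) (hyh : Commute y h) (h2 : IsUnit (2 : A)) :
    y * (z * y) ∈ Submodule.span A {y * y, z} := by
  have e : y * (y * z - z * y) = (y * z - z * y) * y := by rw [hyz]; exact hyh.eq
  simp only [mul_sub, sub_mul, mul_assoc] at e
  have htwo : 2 * (y * (z * y)) = y * y * z + z * (y * y) := by
    rw [two_mul, mul_assoc]; exact (sub_eq_sub_iff_add_eq_add.mp e).symm
  refine (Ideal.unit_mul_mem_iff_mem _ h2).mp (htwo ▸ add_mem ?_ ?_)
  · exact Ideal.mul_mem_left _ _ (Submodule.subset_span (by simp))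
  · exact Ideal.mul_mem_left _ _ (Submodule.subset_span (by simp))

theorem h_mul_y_mem (hyz : y * z - z * y = h) (hyh : Commute y h) (h2 : IsUnit (2 : A)) :
    h * y ∈ Submodule.span A {y * y, z} := by
  have e : h * y = y * (z * y) - z * (y * y) := by rw [← hyz, sub_mul, mul_assoc, mul_assoc]
  exact e ▸ sub_mem (y_mul_z_mul_y_mem hyz hyh h2)
    (Ideal.mul_mem_left _ _ (Submodule.subset_span (by simp)))

theorem h_mul_z_mul_y_mem (hyz : y * z - z * y = h) (hyh : Commute y h) (hzh : Commute z h)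
    (h2 : IsUnit (2 : A)) : h * (z * y) ∈ Submodule.span A {y * y, z} := by
  rw [← mul_assoc, ← hzh.eq, mul_assoc]
  exact Ideal.mul_mem_left _ _ (h_mul_y_mem hyz hyh h2)

theorem z_mul_z_mul_y_mem (hyz : y * z - z * y = h) (hzh : Commute z h) :
    z * (z * y) ∈ Submodule.span A {y * y, z} := by
  have hz : z ∈ Submodule.span A {y * y, z} := Submodule.subset_span (by simp)
  have e : z * (z * y) = z * y * z - h * z := by rw [← hzh.eq, ← hyz]; noncomm_ring
  exact e ▸ sub_mem (Ideal.mul_mem_left _ _ hz) (Ideal.mul_mem_left _ _ hz)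

theorem span_mk_eq_top (R : Type*) [CommRing R] [Algebra R A]
    (hgen : Algebra.adjoin R {y, z, h} = ⊤) (hyz : y * z - z * y = h)
    (hyh : Commute y h) (hzh : Commute z h) (h2 : IsUnit (2 : A)) :
    Submodule.span R {Submodule.Quotient.mk (p := Submodule.span A {y * y, z}) 1,
      Submodule.Quotient.mk y, Submodule.Quotient.mk (z * y)} = ⊤ := by
  set I := Submodule.span A {y * y, z}
  set W := I.restrictScalars R ⊔ Submodule.span R {1, y, z * y}
  have hI : ∀ {u}, u ∈ I → u ∈ W := fun hu => Submodule.mem_sup_left hu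
  have hT : ∀ {u}, u ∈ ({1, y, z * y} : Set A) → u ∈ W :=
    fun hu => Submodule.mem_sup_right (Submodule.subset_span hu)
  have hyy : y * y ∈ I := Submodule.subset_span (by simp)
  have hz : z ∈ I := Submodule.subset_span (by simp)
  have hW : W = ⊤ := by
    refine Submodule.eq_top_of_one_mem_of_mul_mem hgen (hT (by simp)) ?_
    rintro g (rfl | rfl | rfl) <;> apply I.mul_mem_restrictScalars_sup_span <;>
      rintro x (rfl | rfl | rfl)
    · simpa using hT (by simp)
    · exact hI hyy
    · exact hI (y_mul_z_mul_y_mem hyz hyh h2)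
    · simpa using hI hz
    · exact hT (by simp)
    · exact hI (z_mul_z_mul_y_mem hyz hzh)
    · rw [mul_one, ← hyz]
      exact sub_mem (hI (Ideal.mul_mem_left _ _ hz)) (hT (by simp))
    · exact hI (h_mul_y_mem hyz hyh h2)
    · exact hI (h_mul_z_mul_y_mem hyz hyh hzh h2)
  simpa [Set.image_insert_eq] using Submodule.span_image_mk_eq_top hW

end Ring

section LieAlgebra

open UniversalEnvelopingAlgebra

variable {R L : Type*} [CommRing R] [LieRing L] [LieAlgebra R L] {y z h : L}

theorem exists_lieHom_matrix (hli : LinearIndependent R ![y, z, h])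
    (hsp : Submodule.span R {y, z, h} = ⊤) (hyz : ⁅y, z⁆ = h) (hyh : ⁅y, h⁆ = 0)
    (hzh : ⁅z, h⁆ = 0) : ∃ f : L →ₗ⁅R⁆ Matrix (Fin 3) (Fin 3) R,
      f y = Matrix.single 1 0 1 ∧ f z = Matrix.single 2 1 1 := by
  let b := Module.Basis.mk hli (by
    rw [Matrix.range_cons, Matrix.range_cons_cons_empty, Set.singleton_union, hsp])
  let g : Fin 3 → Matrix (Fin 3) (Fin 3) R := ![.single 1 0 1, .single 2 1 1, -.single 2 0 1]
  let f := b.constr R g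
  have hf (i : Fin 3) : f (![y, z, h] i) = g i := by
    rw [← Module.Basis.mk_apply hli]; exact b.constr_basis R g i
  have hfy : f y = .single 1 0 1 := hf 0
  have hfz : f z = .single 2 1 1 := hf 1
  have hfh : f h = -.single 2 0 1 := hf 2
  refine ⟨{ f with map_lie' := f.map_lie_of_basis b ?_ _ _ }, hfy, hfz⟩
  intro i j
  simp only [b, Module.Basis.mk_apply]
  have hzy : ⁅z, y⁆ = -h := by rw [← lie_skew, hyz]
  have hhy : ⁅h, y⁆ = 0 := by rw [← lie_skew, hyh, neg_zero]
  have hhz : ⁅h, z⁆ = 0 := by rw [← lie_skew, hzh, neg_zero]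
  fin_cases i <;> fin_cases j <;>
    simp [hfy, hfz, hfh, hyz, hyh, hzh, hzy, hhy, hhz, Ring.lie_def,
      Matrix.single_mul_single_of_ne]

theorem span_mk_ι_eq_top (h2 : IsUnit (2 : R)) (hsp : Submodule.span R {y, z, h} = ⊤)
    (hyz : ⁅y, z⁆ = h) (hyh : ⁅y, h⁆ = 0) (hzh : ⁅z, h⁆ = 0) :
    Submodule.span R
      {Submodule.Quotient.mk (p := Submodule.span (UniversalEnvelopingAlgebra R L)
        {ι R y * ι R y, ι R z}) 1,
        Submodule.Quotient.mk (ι R y), Submodule.Quotient.mk (ι R z * ι R y)} = ⊤ := by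
  have hgen : Algebra.adjoin R {ι R y, ι R z, ι R h} = ⊤ := by
    simpa only [Set.image_insert_eq, Set.image_singleton] using adjoin_image_ι hsp
  refine span_mk_eq_top R hgen ?_ ?_ ?_ ?_
  · rw [← Ring.lie_def, ← LieHom.map_lie, hyz]
  · rw [commute_iff_lie_eq, ← LieHom.map_lie, hyh, map_zero]
  · rw [commute_iff_lie_eq, ← LieHom.map_lie, hzh, map_zero]
  · rw [← map_ofNat (algebraMap R _) 2]
    exact h2.map _

theorem linearIndependent_mk_ι (hli : LinearIndependent R ![y, z, h])
    (hsp : Submodule.span R {y, z, h} = ⊤) (hyz : ⁅y, z⁆ = h) (hyh : ⁅y, h⁆ = 0)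
    (hzh : ⁅z, h⁆ = 0) :
    LinearIndependent R
      ![Submodule.Quotient.mk (p := Submodule.span (UniversalEnvelopingAlgebra R L)
        {ι R y * ι R y, ι R z}) 1,
        Submodule.Quotient.mk (ι R y), Submodule.Quotient.mk (ι R z * ι R y)] := by
  obtain ⟨f, hfy, hfz⟩ := exists_lieHom_matrix hli hsp hyz hyh hzh
  convert Submodule.linearIndependent_mk_of_mulVec (u := ![1, ι R y, ι R z * ι R y])
    (lift R f) (Pi.single 0 1) ?_ ?_ using 1
  · ext i; fin_cases i <;> rfl
  · rintro x (rfl | rfl) <;> simp [hfy, hfz, Matrix.single_mulVec_eq, -Matrix.mulVec_single]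
  · convert Pi.linearIndependent_single_one (Fin 3) R using 1
    ext i : 1
    fin_cases i <;> simp [hfy, hfz, Matrix.single_mulVec_eq, -Matrix.mulVec_single]

end LieAlgebra

end Heisenberg

theorem stmt2 (F : Type) [Field F] (hchar : ringChar F ≠ 2)
    (L : Type) [LieRing L] [LieAlgebra F L]
    (y z h : L)
    (hbasis₁ : LinearIndependent F ![y, z, h])
    (hbasis₂ : Submodule.span F {y, z, h} = ⊤)
    (hyz : ⁅y, z⁆ = h) (hyh : ⁅y, h⁆ = 0) (hzh : ⁅z, h⁆ = 0) :
    letI U := UniversalEnvelopingAlgebra F L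
    letI ι : L →ₗ⁅F⁆ U := UniversalEnvelopingAlgebra.ι F
    letI a : Submodule U U := Submodule.span U {ι y * ι y, ι z}
    Module.finrank F (U ⧸ a) = 3 ∧
      Submodule.span F {Submodule.Quotient.mk (p := a) 1,
        Submodule.Quotient.mk (p := a) (ι y),
        Submodule.Quotient.mk (p := a) (ι z * ι y)} = ⊤ := by
  have h2 : IsUnit (2 : F) := IsUnit.mk0 2 (Ring.two_ne_zero hchar)
  have hspan := Heisenberg.span_mk_ι_eq_top h2 hbasis₂ hyz hyh hzh
  have hli := Heisenberg.linearIndependent_mk_ι hbasis₁ hbasis₂ hyz hyh hzh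
  refine ⟨?_, hspan⟩
  rw [Module.finrank_eq_card_basis (Module.Basis.mk hli (by
    rw [Matrix.range_cons, Matrix.range_cons_cons_empty, Set.singleton_union, hspan])),
    Fintype.card_fin]
end

section
/- Let F be a field and A = F[y,z]/(yz). Let N be a finitely generated graded A-module which is Cohen–Macaulay of dimension 1. Then N admits a finite filtration 0 = N_0 ⊂ N_1 ⊂ ... ⊂ N_t = N by graded submodules such that each successive quotient N_{i+1}/N_i is isomorphic, up to a shift of grading, to A/(y) or A/(z). -/
set_option synthInstance.maxHeartbeats 1000000
set_option maxHeartbeats 2000000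

open MvPolynomial

noncomputable section

variable (F : Type) [Field F]

/-- The ring `A = F[y,z]/(yz)`. -/
abbrev RingA := MvPolynomial (Fin 2) F ⧸
  Ideal.span {(X 0 : MvPolynomial (Fin 2) F) * X 1}

/-- `y ∈ A`. -/
def yA : RingA F := Ideal.Quotient.mk _ (X 0)

/-- `z ∈ A`. -/
def zA : RingA F := Ideal.Quotient.mk _ (X 1)


set_option linter.unusedSectionVars false
set_option linter.unusedTactic false
set_option linter.unreachableTactic false
set_option linter.unnecessarySimpa false
set_option linter.unnecessarySeqFocus false

section Aux
lemma yz_zero : yA F * zA F = 0 := by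
  rw [yA, zA, ← map_mul, Ideal.Quotient.eq_zero_iff_mem]
  exact Ideal.subset_span rfl

lemma mkC_smul (c : F) (w : RingA F) :
    Ideal.Quotient.mk (Ideal.span {(X 0 : MvPolynomial (Fin 2) F) * X 1}) (C c) * w = c • w := by
  have h : Ideal.Quotient.mk (Ideal.span {(X 0 : MvPolynomial (Fin 2) F) * X 1}) (C c)
      = algebraMap F (RingA F) c := by
    rw [← MvPolynomial.algebraMap_eq, IsScalarTower.algebraMap_apply F (MvPolynomial (Fin 2) F)
      (RingA F)]
    rfl
  rw [h]
  exact (Algebra.smul_def c w).symm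

lemma span_pows : ∀ a : RingA F, a ∈ Submodule.span F
    (Set.range (fun k : ℕ => yA F ^ k) ∪ Set.range (fun k : ℕ => zA F ^ k)) := by
  intro a
  obtain ⟨f, rfl⟩ := Ideal.Quotient.mk_surjective a
  induction f using MvPolynomial.induction_on' with
  | add p q hp hq => rw [map_add]; exact Submodule.add_mem _ hp hq
  | monomial s c =>
    have hmon : monomial s c = C c * (X 0 ^ s 0 * X 1 ^ s 1) := by
      rw [monomial_eq, Finsupp.prod_fintype _ _ (fun i => pow_zero _), Fin.prod_univ_two]
    by_cases h0 : s 0 = 0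
    · have : Ideal.Quotient.mk _ (monomial s c) = c • zA F ^ (s 1) := by
        rw [hmon, h0, pow_zero, one_mul, map_mul, map_pow, mkC_smul]; rfl
      rw [this]
      exact Submodule.smul_mem _ _ (Submodule.subset_span (Or.inr ⟨s 1, rfl⟩))
    · by_cases h1 : s 1 = 0
      · have : Ideal.Quotient.mk _ (monomial s c) = c • yA F ^ (s 0) := by
          rw [hmon, h1, pow_zero, mul_one, map_mul, map_pow, mkC_smul]; rfl
        rw [this]
        exact Submodule.smul_mem _ _ (Submodule.subset_span (Or.inl ⟨s 0, rfl⟩))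
      · have : Ideal.Quotient.mk (Ideal.span {(X 0 : MvPolynomial (Fin 2) F) * X 1}) (monomial s c) = 0 := by
          rw [Ideal.Quotient.eq_zero_iff_mem, hmon, Ideal.mem_span_singleton]
          refine Dvd.dvd.mul_left ⟨X 0 ^ (s 0 - 1) * X 1 ^ (s 1 - 1), ?_⟩ _
          obtain ⟨a, ha⟩ := Nat.exists_eq_succ_of_ne_zero h0
          obtain ⟨b, hb⟩ := Nat.exists_eq_succ_of_ne_zero h1
          rw [ha, hb]; simp only [Nat.succ_sub_one, Nat.succ_eq_add_one]; ring
        rw [this]; exact Submodule.zero_mem _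

variable {F}

lemma spanA_decomp (u v : RingA F)
    (hsp : ∀ a : RingA F, a ∈ Submodule.span F
      (Set.range (fun k : ℕ => u ^ k) ∪ Set.range (fun k : ℕ => v ^ k)))
    (a : RingA F) :
    ∃ c : ℕ →₀ F, a - c.sum (fun k μ => μ • v ^ k) ∈ Ideal.span {u} := by
  have hx := hsp a
  induction hx using Submodule.span_induction with
  | mem x h =>
    rcases h with ⟨k, rfl⟩ | ⟨k, rfl⟩
    · cases k with
      | zero =>
        refine ⟨Finsupp.single 0 1, ?_⟩
        rw [Finsupp.sum_single_index (by simp)]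
        simp
      | succ k =>
        refine ⟨0, ?_⟩
        rw [Finsupp.sum_zero_index, sub_zero, Ideal.mem_span_singleton]
        exact ⟨u ^ k, by ring⟩
    · refine ⟨Finsupp.single k 1, ?_⟩
      rw [Finsupp.sum_single_index (by simp)]
      simp
  | zero => exact ⟨0, by simp⟩
  | add x y hx hy ihx ihy =>
    obtain ⟨c₁, h₁⟩ := ihx
    obtain ⟨c₂, h₂⟩ := ihy
    refine ⟨c₁ + c₂, ?_⟩
    rw [Finsupp.sum_add_index' (fun k => by simp) (fun k a b => add_smul a b _)]
    have := Ideal.add_mem _ h₁ h₂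
    convert this using 1
    ring
  | smul μ x hx ih =>
    obtain ⟨c, h⟩ := ih
    refine ⟨μ • c, ?_⟩
    rw [Finsupp.sum_smul_index' (fun k => by simp)]
    have : (μ • x) - (c.sum fun k ν => (μ • ν) • v ^ k) = μ • (x - c.sum fun k ν => ν • v ^ k) := by
      rw [smul_sub, Finsupp.smul_sum]
      congr 1
      apply Finsupp.sum_congr
      intro k _
      rw [smul_eq_mul, ← smul_smul]
    rw [this]
    exact Submodule.smul_of_tower_mem _ μ h


section Mod
variable {N : Type} [AddCommGroup N] [Module F N] [Module (RingA F) N]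
  [IsScalarTower F (RingA F) N]
  (ℳ : ℤ → Submodule F N) [DirectSum.Decomposition ℳ]

lemma pow_grade {v : RingA F} (hgv : ∀ n : ℤ, ∀ x ∈ ℳ n, v • x ∈ ℳ (n + 1))
    {d : ℤ} {x : N} (hx : x ∈ ℳ d) (k : ℕ) : v ^ k • x ∈ ℳ (d + k) := by
  induction k with
  | zero => simpa using hx
  | succ k ih =>
    have : v ^ (k+1) • x = v • (v ^ k • x) := by rw [← mul_smul, pow_succ']
    rw [this]
    have := hgv (d + k) _ ih
    convert this using 2
    push_cast
    ring

lemma descLemma (u v : RingA F) (huv : ∀ x : N, u • v • x = 0)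
    (hsp : ∀ a : RingA F, a ∈ Submodule.span F
      (Set.range (fun k : ℕ => u ^ k) ∪ Set.range (fun k : ℕ => v ^ k)))
    (C : Submodule (RingA F) N) (T : Set N) (hT : ∀ g ∈ T, u • g ∈ C) :
    ∀ w ∈ C ⊔ Submodule.span (RingA F) T,
      w ∈ (C.restrictScalars F) ⊔ Submodule.span F (⋃ g ∈ T, Set.range (fun k : ℕ => v ^ k • g)) := by
  set TT : Set N := ⋃ g ∈ T, Set.range (fun k : ℕ => v ^ k • g) with hTT
  set E : Submodule F N := (C.restrictScalars F) ⊔ Submodule.span F TT with hE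
  have hCE : ∀ w ∈ C, w ∈ E := fun w hw => Submodule.mem_sup_left hw
  have hTE : ∀ g ∈ T, g ∈ E := by
    intro g hg
    apply Submodule.mem_sup_right
    apply Submodule.subset_span
    exact Set.mem_iUnion₂.mpr ⟨g, hg, 0, by simp⟩
  have hEu : ∀ w ∈ E, u • w ∈ E := by
    intro w hw
    rcases Submodule.mem_sup.mp hw with ⟨c, hc, s, hs, rfl⟩
    rw [smul_add]
    apply Submodule.add_mem
    · exact hCE _ (C.smul_mem u hc)
    · clear hw
      induction hs using Submodule.span_induction with
      | mem g hg =>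
        rcases Set.mem_iUnion₂.mp hg with ⟨g₀, hg₀, k, rfl⟩
        cases k with
        | zero => simpa using hCE _ (hT g₀ hg₀)
        | succ k =>
          have : u • v ^ (k+1) • g₀ = 0 := by
            rw [pow_succ', mul_smul]
            exact huv _
          rw [this]; exact E.zero_mem
      | zero => rw [smul_zero]; exact E.zero_mem
      | add a b ha hb iha ihb => rw [smul_add]; exact E.add_mem iha ihb
      | smul μ a ha ih => rw [smul_comm]; exact E.smul_mem μ ih
  have hEv : ∀ w ∈ E, v • w ∈ E := by
    intro w hw
    rcases Submodule.mem_sup.mp hw with ⟨c, hc, s, hs, rfl⟩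
    rw [smul_add]
    apply Submodule.add_mem
    · exact hCE _ (C.smul_mem v hc)
    · clear hw
      induction hs using Submodule.span_induction with
      | mem g hg =>
        rcases Set.mem_iUnion₂.mp hg with ⟨g₀, hg₀, k, rfl⟩
        have : v • v ^ k • g₀ = v ^ (k+1) • g₀ := by rw [pow_succ', mul_smul]
        rw [this]
        exact Submodule.mem_sup_right (Submodule.subset_span
          (Set.mem_iUnion₂.mpr ⟨g₀, hg₀, k+1, rfl⟩))
      | zero => rw [smul_zero]; exact E.zero_mem
      | add a b ha hb iha ihb => rw [smul_add]; exact E.add_mem iha ihb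
      | smul μ a ha ih => rw [smul_comm]; exact E.smul_mem μ ih
  have hEa : ∀ (a : RingA F), ∀ w ∈ E, a • w ∈ E := by
    intro a w hw
    have h := hsp a
    induction h using Submodule.span_induction with
    | mem b hb =>
      rcases hb with ⟨k, rfl⟩ | ⟨k, rfl⟩
      · induction k with
        | zero => simpa using hw
        | succ k ih =>
          show u ^ (k + 1) • w ∈ E
          rw [pow_succ', mul_smul]
          exact hEu _ ih
      · induction k with
        | zero => simpa using hw
        | succ k ih =>
          show v ^ (k + 1) • w ∈ E
          rw [pow_succ', mul_smul]
          exact hEv _ ih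
    | zero => convert E.zero_mem using 1; exact zero_smul (RingA F) w
    | add a b ha hb iha ihb => rw [add_smul]; exact E.add_mem iha ihb
    | smul μ a ha ih => rw [smul_assoc]; exact E.smul_mem μ ih
  intro w hw
  rcases Submodule.mem_sup.mp hw with ⟨c, hc, s, hs, rfl⟩
  apply E.add_mem (hCE _ hc)
  clear hw
  induction hs using Submodule.span_induction with
  | mem g hg => exact hTE g hg
  | zero => exact E.zero_mem
  | add a b ha hb iha ihb => exact E.add_mem iha ihb
  | smul a w' hw' ih => exact hEa a w' ih

lemma spanF_decompose (T : Set N) (hT : ∀ g ∈ T, ∃ d : ℤ, g ∈ ℳ d) :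
    ∀ s ∈ Submodule.span F T, ∀ e : ℤ,
      ((DirectSum.decompose ℳ s e : ℳ e) : N) ∈ Submodule.span F (T ∩ (ℳ e : Set N)) := by
  intro s hs e
  induction hs using Submodule.span_induction with
  | mem g hg =>
    obtain ⟨d, hd⟩ := hT g hg
    by_cases hde : d = e
    · subst hde
      rw [DirectSum.decompose_of_mem_same ℳ hd]
      exact Submodule.subset_span ⟨hg, hd⟩
    · rw [DirectSum.decompose_of_mem_ne ℳ hd hde]
      exact Submodule.zero_mem _
  | zero => rw [DirectSum.decompose_zero]; simpa using Submodule.zero_mem _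
  | add a b ha hb iha ihb =>
    rw [DirectSum.decompose_add]
    simp only [DirectSum.add_apply, Submodule.coe_add]
    exact Submodule.add_mem _ iha ihb
  | smul μ a ha ih =>
    rw [DirectSum.decompose_smul]
    simp only [DirectSum.smul_apply, SetLike.val_smul]
    exact Submodule.smul_mem _ μ ih


lemma decompose_smul_comm {u : RingA F} (hgu : ∀ n : ℤ, ∀ x ∈ ℳ n, u • x ∈ ℳ (n + 1))
    (n : ℤ) (x : N) :
    ((DirectSum.decompose ℳ (u • x) (n + 1) : ℳ (n + 1)) : N)
      = u • ((DirectSum.decompose ℳ x n : ℳ n) : N) := by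
  induction x using DirectSum.Decomposition.inductionOn ℳ with
  | zero => simp
  | @homogeneous i m =>
    by_cases hin : i = n
    · subst hin
      rw [DirectSum.decompose_of_mem_same ℳ (hgu i m m.2), DirectSum.decompose_of_mem_same ℳ m.2]
    · rw [DirectSum.decompose_of_mem_ne ℳ (hgu i m m.2) (by omega),
        DirectSum.decompose_of_mem_ne ℳ m.2 hin, smul_zero]
  | add m m' ih ih' =>
    rw [smul_add, DirectSum.decompose_add, DirectSum.decompose_add]
    simp only [DirectSum.add_apply, Submodule.coe_add]
    rw [ih, ih', smul_add]

lemma bigW (u v : RingA F)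
    (huv : ∀ x : N, u • v • x = 0)
    (hgu : ∀ n : ℤ, ∀ x ∈ ℳ n, u • x ∈ ℳ (n + 1))
    (hgv : ∀ n : ℤ, ∀ x ∈ ℳ n, v • x ∈ ℳ (n + 1))
    (hsp : ∀ a : RingA F, a ∈ Submodule.span F
      (Set.range (fun k : ℕ => u ^ k) ∪ Set.range (fun k : ℕ => v ^ k)))
    (hspd : ∀ a : RingA F, ∃ c : ℕ →₀ F,
      a - c.sum (fun k μ => μ • v ^ k) ∈ Ideal.span {u}) :
    ∀ (n : ℕ) (C D : Submodule (RingA F) N) (G : Finset N), G.card = n →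
    C ≤ D →
    (∀ m : ℤ, ∀ x ∈ C, ((DirectSum.decompose ℳ x m : ℳ m) : N) ∈ C) →
    (∀ x ∈ D, u • x ∈ C) →
    (∀ x ∈ D, v • x ∈ C → x ∈ C) →
    (∀ w ∈ G, w ∈ D) → (∀ w ∈ G, ∃ d : ℤ, w ∈ ℳ d) →
    D = C ⊔ Submodule.span (RingA F) (G : Set N) →
    ∃ (t : ℕ) (c : Fin (t + 1) → Submodule (RingA F) N),
      Monotone c ∧ c 0 = C ∧ c (Fin.last t) = D ∧
      (∀ j, ∀ m : ℤ, ∀ x ∈ c j, ((DirectSum.decompose ℳ x m : ℳ m) : N) ∈ c j) ∧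
      (∀ i : Fin t, Nonempty ((↥(c i.succ) ⧸ Submodule.comap (c i.succ).subtype
        (c i.castSucc)) ≃ₗ[RingA F] (RingA F ⧸ Ideal.span {u}))) := by
  classical
  intro n
  induction n with
  | zero =>
    intro C D G hcard hCD hCgr hu hv hGD hGhom hspan
    have hGe : G = ∅ := Finset.card_eq_zero.mp hcard
    have hDC : D = C := by
      rw [hspan, hGe]
      simp
    refine ⟨0, fun _ => C, monotone_const, rfl, hDC.symm, fun j => hCgr, fun i => i.elim0⟩
  | succ m ih =>
    intro C D G hcard hCD hCgr hu hv hGD hGhom hspan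
    by_cases hex : ∃ w ∈ G, w ∈ C
    · obtain ⟨w, hwG, hwC⟩ := hex
      have key : Submodule.span (RingA F) (G : Set N)
          ≤ C ⊔ Submodule.span (RingA F) ((G.erase w : Finset N) : Set N) := by
        rw [Submodule.span_le]
        intro g hg
        rcases eq_or_ne g w with rfl | hgw
        · exact Submodule.mem_sup_left hwC
        · exact Submodule.mem_sup_right (Submodule.subset_span
            (Finset.mem_coe.mpr (Finset.mem_erase.mpr ⟨hgw, hg⟩)))
      refine ih C D (G.erase w)
        (by rw [Finset.card_erase_of_mem hwG, hcard]; omega) hCD hCgr hu hv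
        (fun g hg => hGD g (Finset.mem_of_mem_erase hg))
        (fun g hg => hGhom g (Finset.mem_of_mem_erase hg)) ?_
      apply le_antisymm
      · rw [hspan]
        exact sup_le le_sup_left key
      · apply sup_le hCD
        refine le_trans (Submodule.span_mono ?_) (hspan ▸ le_sup_right)
        exact fun g hg => Finset.mem_coe.mpr (Finset.mem_of_mem_erase hg)
    · push_neg at hex
      -- choose minimal degree element
      set f : N → ℤ := fun w => if h : ∃ d : ℤ, w ∈ ℳ d then h.choose else 0 with hf
      have hfspec : ∀ w ∈ G, w ∈ ℳ (f w) := by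
        intro w hw
        have h := hGhom w hw
        rw [hf]
        simp only [dif_pos h]
        exact h.choose_spec
      have hGne : G.Nonempty := by
        rw [← Finset.card_pos, hcard]; omega
      obtain ⟨x, hxG, hmin⟩ := Finset.exists_min_image G f hGne
      have hxD : x ∈ D := hGD x hxG
      have hxC : x ∉ C := hex x hxG
      have hxh : x ∈ ℳ (f x) := hfspec x hxG
      set C' : Submodule (RingA F) N := C ⊔ Submodule.span (RingA F) {x} with hC'
      have hxC' : x ∈ C' := Submodule.mem_sup_right (Submodule.mem_span_singleton_self x)
      have hCC' : C ≤ C' := le_sup_left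
      have hC'D : C' ≤ D := sup_le hCD ((Submodule.span_singleton_le_iff_mem _ _).mpr hxD)
      have hTx : ∀ g ∈ ({x} : Set N), u • g ∈ C := by
        intro g hg
        rw [Set.mem_singleton_iff] at hg
        rw [hg]
        exact hu x hxD
      set Tx : Set N := ⋃ g ∈ ({x} : Set N), Set.range (fun k : ℕ => v ^ k • g) with hTxdef
      have desc1 : ∀ w ∈ C', w ∈ (C.restrictScalars F) ⊔ Submodule.span F Tx :=
        descLemma u v huv hsp C {x} hTx
      have hTxhom : ∀ g ∈ Tx, ∃ d : ℤ, g ∈ ℳ d := by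
        intro g hg
        rcases Set.mem_iUnion₂.mp hg with ⟨g₀, hg₀, k, rfl⟩
        rw [Set.mem_singleton_iff] at hg₀
        rw [hg₀]
        exact ⟨f x + k, pow_grade ℳ hgv hxh k⟩
      have hTxC' : ∀ g ∈ Tx, g ∈ C' := by
        intro g hg
        rcases Set.mem_iUnion₂.mp hg with ⟨g₀, hg₀, k, rfl⟩
        rw [Set.mem_singleton_iff] at hg₀
        rw [hg₀]
        exact C'.smul_mem _ hxC'
      have C'gr : ∀ (e : ℤ), ∀ w ∈ C', ((DirectSum.decompose ℳ w e : ℳ e) : N) ∈ C' := by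
        intro e w hw
        rcases Submodule.mem_sup.mp (desc1 w hw) with ⟨c, hc, s, hs, rfl⟩
        rw [DirectSum.decompose_add]
        simp only [DirectSum.add_apply, Submodule.coe_add]
        apply C'.add_mem
        · exact hCC' (hCgr e c hc)
        · have h1 := spanF_decompose ℳ Tx hTxhom s hs e
          have h2 : Submodule.span F (Tx ∩ (ℳ e : Set N)) ≤ C'.restrictScalars F :=
            Submodule.span_le.mpr (fun g hg => hTxC' g hg.1)
          exact h2 h1
      have vnotC : ∀ k : ℕ, v ^ k • x ∉ C := by
        intro k
        induction k with
        | zero => simpa using hxC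
        | succ k ih =>
          intro hmem
          apply ih
          apply hv _ (D.smul_mem _ hxD)
          have : v • v ^ k • x = v ^ (k + 1) • x := by rw [pow_succ', mul_smul]
          rw [this]
          exact hmem
      set TG : Set N := ⋃ g ∈ (G : Set N), Set.range (fun k : ℕ => v ^ k • g) with hTGdef
      have descD : ∀ w ∈ D, w ∈ (C.restrictScalars F) ⊔ Submodule.span F TG := by
        intro w hw
        exact descLemma u v huv hsp C (G : Set N) (fun g hg => hu g (hGD g hg)) w (hspan ▸ hw)
      have hTGhom : ∀ g ∈ TG, ∃ d : ℤ, g ∈ ℳ d := by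
        intro g hg
        rcases Set.mem_iUnion₂.mp hg with ⟨g₀, hg₀, k, rfl⟩
        exact ⟨f g₀ + k, pow_grade ℳ hgv (hfspec g₀ (Finset.mem_coe.mp hg₀)) k⟩
      have hTGD : ∀ g ∈ TG, g ∈ D := by
        intro g hg
        rcases Set.mem_iUnion₂.mp hg with ⟨g₀, hg₀, k, rfl⟩
        exact D.smul_mem _ (hGD g₀ (Finset.mem_coe.mp hg₀))
      have Dgr : ∀ (e : ℤ), ∀ w ∈ D, ((DirectSum.decompose ℳ w e : ℳ e) : N) ∈ D := by
        intro e w hw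
        rcases Submodule.mem_sup.mp (descD w hw) with ⟨c, hc, s, hs, rfl⟩
        rw [DirectSum.decompose_add]
        simp only [DirectSum.add_apply, Submodule.coe_add]
        apply D.add_mem
        · exact hCD (hCgr e c hc)
        · have h1 := spanF_decompose ℳ TG hTGhom s hs e
          have h2 : Submodule.span F (TG ∩ (ℳ e : Set N)) ≤ D.restrictScalars F :=
            Submodule.span_le.mpr (fun g hg => hTGD g hg.1)
          exact h2 h1
      have lowdeg : ∀ w ∈ D, ∀ e : ℤ, e < f x → w ∈ ℳ e → w ∈ C := by
        intro w hw e he hwe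
        rcases Submodule.mem_sup.mp (descD w hw) with ⟨c, hc, s, hs, rfl⟩
        have hcomp := spanF_decompose ℳ TG hTGhom s hs e
        have hzero : Submodule.span F (TG ∩ (ℳ e : Set N)) ≤ C.restrictScalars F := by
          apply Submodule.span_le.mpr
          rintro g ⟨hg1, hg2⟩
          rcases Set.mem_iUnion₂.mp hg1 with ⟨g₀, hg₀, k, rfl⟩
          have hm1 : v ^ k • g₀ ∈ ℳ (f g₀ + k) :=
            pow_grade ℳ hgv (hfspec g₀ (Finset.mem_coe.mp hg₀)) k
          have hne : (f g₀ + k : ℤ) ≠ e := by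
            have := hmin g₀ (Finset.mem_coe.mp hg₀)
            have hk : (0 : ℤ) ≤ (k : ℤ) := Int.ofNat_nonneg k
            omega
          have hzz : v ^ k • g₀ = 0 := by
            have h1 := DirectSum.decompose_of_mem_same ℳ (hg2 : v ^ k • g₀ ∈ ℳ e)
            rw [DirectSum.decompose_of_mem_ne ℳ hm1 hne] at h1
            exact h1.symm
          show v ^ k • g₀ ∈ (C.restrictScalars F : Set N)
          rw [SetLike.mem_coe, hzz]
          exact C.zero_mem
        have hw_eq : ((DirectSum.decompose ℳ (c + s) e : ℳ e) : N) = c + s :=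
          DirectSum.decompose_of_mem_same ℳ hwe
        rw [DirectSum.decompose_add] at hw_eq
        simp only [DirectSum.add_apply, Submodule.coe_add] at hw_eq
        rw [← hw_eq]
        exact C.add_mem (hCgr e c hc) (hzero hcomp)
      have hvC' : ∀ w ∈ D, v • w ∈ C' → w ∈ C' := by
        intro w hw hvw
        have hcomp : ∀ e : ℤ, ((DirectSum.decompose ℳ w e : ℳ e) : N) ∈ C' := by
          intro e
          set we : N := ((DirectSum.decompose ℳ w e : ℳ e) : N) with hwe_def
          have hweD : we ∈ D := Dgr e w hw
          have hwe_hom : we ∈ ℳ e := (DirectSum.decompose ℳ w e).2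
          have hv_we : v • we ∈ C' := by
            rw [hwe_def, ← decompose_smul_comm ℳ hgv e w]
            exact C'gr (e + 1) _ hvw
          by_cases hle : e < f x
          · exact hCC' (lowdeg _ hweD e hle hwe_hom)
          · push_neg at hle
            set k₁ : ℕ := (e - f x).toNat with hk₁def
            have hk₁e : f x + (k₁ : ℤ) = e := by
              rw [hk₁def]
              omega
            have hsub : Tx ∩ (ℳ (e + 1) : Set N) ⊆ {0, v ^ (k₁ + 1) • x} := by
              rintro g ⟨hg1, hg2⟩
              rcases Set.mem_iUnion₂.mp hg1 with ⟨g₀, hg₀, k, rfl⟩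
              rw [Set.mem_singleton_iff] at hg₀
              rw [hg₀] at hg2 ⊢
              by_cases hk : k = k₁ + 1
              · subst hk
                exact Or.inr rfl
              · left
                have hne : (f x + k : ℤ) ≠ e + 1 := by
                  have : (k : ℤ) ≠ (k₁ : ℤ) + 1 := by exact_mod_cast hk
                  omega
                have h1 := DirectSum.decompose_of_mem_same ℳ (hg2 : v ^ k • x ∈ ℳ (e + 1))
                rw [DirectSum.decompose_of_mem_ne ℳ (pow_grade ℳ hgv hxh k) hne] at h1
                exact h1.symm
            obtain ⟨c, hc, s, hs, heq⟩ := Submodule.mem_sup.mp (desc1 _ hv_we)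
            have hvwe_mem : v • we ∈ ℳ (e + 1) := hgv e we hwe_hom
            have hdecs := spanF_decompose ℳ Tx hTxhom s hs (e + 1)
            have hdecs2 : ((DirectSum.decompose ℳ s (e + 1) : ℳ (e + 1)) : N) ∈
                Submodule.span F ({v ^ (k₁ + 1) • x} : Set N) := by
              have hmono := Submodule.span_mono (R := F) hsub
              rw [show ({0, v ^ (k₁ + 1) • x} : Set N) = insert 0 {v ^ (k₁ + 1) • x} from rfl,
                Submodule.span_insert_zero] at hmono
              exact hmono (hdecs)
            obtain ⟨μ, hμ⟩ := Submodule.mem_span_singleton.mp hdecs2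
            have hdecc := hCgr (e + 1) c hc
            have hmain : v • we = ((DirectSum.decompose ℳ c (e + 1) : ℳ (e + 1)) : N)
                + μ • v ^ (k₁ + 1) • x := by
              have h1 := DirectSum.decompose_of_mem_same ℳ hvwe_mem
              rw [← heq] at h1
              rw [DirectSum.decompose_add] at h1
              simp only [DirectSum.add_apply, Submodule.coe_add] at h1
              rw [← heq, ← h1, ← hμ]
            have hsubC : v • (we - μ • v ^ k₁ • x)
                = ((DirectSum.decompose ℳ c (e + 1) : ℳ (e + 1)) : N) := by
              rw [smul_sub, hmain]
              have : v • μ • v ^ k₁ • x = μ • v ^ (k₁ + 1) • x := by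
                rw [smul_comm, pow_succ', mul_smul]
              rw [this]
              abel
            have hw'D : we - μ • v ^ k₁ • x ∈ D :=
              D.sub_mem hweD (Submodule.smul_of_tower_mem D μ (D.smul_mem _ hxD))
            have hw'C : we - μ • v ^ k₁ • x ∈ C := by
              apply hv _ hw'D
              rw [hsubC]
              exact hdecc
            have : we = (we - μ • v ^ k₁ • x) + μ • v ^ k₁ • x := by abel
            rw [this]
            exact C'.add_mem (hCC' hw'C)
              (Submodule.smul_of_tower_mem C' μ (C'.smul_mem _ hxC'))
        have hwsum := DirectSum.sum_support_decompose ℳ w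
        rw [← hwsum]
        exact Submodule.sum_mem _ (fun e he => hcomp e)
      have hkernel : ∀ a : RingA F, a • x ∈ C → a ∈ Ideal.span {u} := by
        intro a hax
        obtain ⟨c, hc⟩ := hspd a
        have hbx : (a - c.sum (fun k μ => μ • v ^ k)) • x ∈ C := by
          rcases Ideal.mem_span_singleton'.mp hc with ⟨r, hr⟩
          rw [← hr, mul_smul]
          exact C.smul_mem r (hu x hxD)
        have hsumC : (c.sum (fun k μ => μ • v ^ k)) • x ∈ C := by
          have heq : (c.sum fun k μ => μ • v ^ k) • x
              = a • x - (a - c.sum (fun k μ => μ • v ^ k)) • x := by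
            rw [sub_smul, sub_sub_cancel]
          rw [heq]
          exact C.sub_mem hax hbx
        have hrepr : (c.sum fun k μ => μ • v ^ k) • x
            = ∑ k ∈ c.support, (c k) • (v ^ k • x) := by
          rw [Finsupp.sum, Finset.sum_smul]
          exact Finset.sum_congr rfl (fun k _ => smul_assoc _ _ _)
        have hckzero : ∀ k₀ : ℕ, c k₀ = 0 := by
          intro k₀
          by_cases hk₀ : k₀ ∈ c.support
          · by_contra hne0
            apply vnotC k₀
            have hdec := hCgr (f x + k₀) _ hsumC
            have hcompute : ((DirectSum.decompose ℳ ((c.sum fun k μ => μ • v ^ k) • x)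
                (f x + k₀) : ℳ (f x + k₀)) : N) = c k₀ • (v ^ k₀ • x) := by
              rw [hrepr]
              have hds : DirectSum.decompose ℳ (∑ k ∈ c.support, (c k) • (v ^ k • x))
                  = ∑ k ∈ c.support, DirectSum.decompose ℳ ((c k) • (v ^ k • x)) :=
                map_sum (DirectSum.decomposeLinearEquiv ℳ) _ _
              rw [hds, DFinsupp.finset_sum_apply]
              rw [AddSubmonoidClass.coe_finset_sum]
              rw [Finset.sum_eq_single k₀]
              · have hmem : c k₀ • (v ^ k₀ • x) ∈ ℳ (f x + k₀) :=
                  Submodule.smul_mem _ _ (pow_grade ℳ hgv hxh k₀)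
                rw [DirectSum.decompose_of_mem_same ℳ hmem]
              · intro k hk hkne
                have hmem : c k • (v ^ k • x) ∈ ℳ (f x + k) :=
                  Submodule.smul_mem _ _ (pow_grade ℳ hgv hxh k)
                have hne : (f x + k : ℤ) ≠ f x + k₀ := by
                  have : (k : ℤ) ≠ (k₀ : ℤ) := by exact_mod_cast hkne
                  omega
                rw [DirectSum.decompose_of_mem_ne ℳ hmem hne]
              · intro hh
                exact absurd hk₀ hh
            rw [hcompute] at hdec
            have : v ^ k₀ • x = (c k₀)⁻¹ • (c k₀ • (v ^ k₀ • x)) := by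
              rw [smul_smul, inv_mul_cancel₀ hne0, one_smul]
            rw [this]
            exact Submodule.smul_of_tower_mem C _ hdec
          · exact Finsupp.notMem_support_iff.mp hk₀
        have hc0 : c = 0 := Finsupp.ext hckzero
        rw [hc0] at hc
        simpa using hc
      set ψ : RingA F →ₗ[RingA F] (↥C' ⧸ Submodule.comap C'.subtype C) :=
        (Submodule.comap C'.subtype C).mkQ.comp
          (LinearMap.toSpanSingleton (RingA F) ↥C' ⟨x, hxC'⟩) with hψdef
      have hψval : ∀ a : RingA F,
          ψ a = Submodule.Quotient.mk ⟨a • x, C'.smul_mem a hxC'⟩ := by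
        intro a
        rfl
      have hψsurj : Function.Surjective ψ := by
        intro q
        obtain ⟨⟨w, hw⟩, rfl⟩ := Submodule.Quotient.mk_surjective _ q
        rcases Submodule.mem_sup.mp hw with ⟨cw, hcw, s, hs, hws⟩
        obtain ⟨a, rfl⟩ := Submodule.mem_span_singleton.mp hs
        refine ⟨a, ?_⟩
        rw [hψval]
        rw [Submodule.Quotient.eq]
        show C'.subtype _ ∈ C
        simp only [Submodule.subtype_apply]
        have : (⟨a • x, C'.smul_mem a hxC'⟩ - ⟨w, hw⟩ : ↥C') = ⟨a • x - w, sub_mem (C'.smul_mem a hxC') hw⟩ := rfl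
        rw [this]
        show a • x - w ∈ C
        rw [← hws]
        have : a • x - (cw + a • x) = -cw := by abel
        rw [this]
        exact C.neg_mem hcw
      have hψker : LinearMap.ker ψ = Ideal.span {u} := by
        ext a
        rw [LinearMap.mem_ker, hψval, Submodule.Quotient.mk_eq_zero, Submodule.mem_comap]
        simp only [Submodule.subtype_apply]
        show a • x ∈ C ↔ _
        constructor
        · exact hkernel a
        · intro h
          rcases Ideal.mem_span_singleton'.mp h with ⟨r, hr⟩
          rw [← hr, mul_smul]
          exact C.smul_mem r (hu x hxD)
      have hiso : Nonempty ((↥C' ⧸ Submodule.comap C'.subtype C) ≃ₗ[RingA F]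
          (RingA F ⧸ Ideal.span {u})) :=
        ⟨(ψ.quotKerEquivOfSurjective hψsurj).symm.trans (Submodule.quotEquivOfEq _ _ hψker)⟩
      have hspan' : D = C' ⊔ Submodule.span (RingA F) ((G.erase x : Finset N) : Set N) := by
        apply le_antisymm
        · rw [hspan]
          apply sup_le (le_trans hCC' le_sup_left)
          rw [Submodule.span_le]
          intro g hg
          rcases eq_or_ne g x with rfl | hgx
          · exact Submodule.mem_sup_left hxC'
          · exact Submodule.mem_sup_right (Submodule.subset_span
              (Finset.mem_coe.mpr (Finset.mem_erase.mpr ⟨hgx, hg⟩)))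
        · apply sup_le hC'D
          rw [Submodule.span_le]
          intro g hg
          exact hGD g (Finset.mem_of_mem_erase (Finset.mem_coe.mp hg))
      obtain ⟨t, cc0, hmono, hcc00, hcclast, hccgr, hccsteps⟩ :=
        ih C' D (G.erase x) (by rw [Finset.card_erase_of_mem hxG, hcard]; omega) hC'D C'gr
          (fun w hw => hCC' (hu w hw)) hvC'
          (fun g hg => hGD g (Finset.mem_of_mem_erase hg))
          (fun g hg => hGhom g (Finset.mem_of_mem_erase hg)) hspan'
      refine ⟨t + 1, Fin.cases C cc0, ?_, ?_, ?_, ?_, ?_⟩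
      · rw [Fin.monotone_iff_le_succ]
        intro i
        induction i using Fin.cases with
        | zero =>
          simp only [Fin.castSucc_zero, Fin.cases_zero, Fin.cases_succ, hcc00]
          exact hCC'
        | succ j =>
          rw [← Fin.succ_castSucc]
          simp only [Fin.cases_succ]
          exact hmono (Fin.castSucc_le_succ j)
      · simp only [Fin.cases_zero]
      · rw [← Fin.succ_last]
        simp only [Fin.cases_succ]
        exact hcclast
      · intro j
        induction j using Fin.cases with
        | zero => simpa only [Fin.cases_zero] using hCgr
        | succ j => simpa only [Fin.cases_succ] using hccgr j
      · intro i
        induction i using Fin.cases with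
        | zero =>
          simp only [Fin.castSucc_zero, Fin.cases_zero, Fin.cases_succ]
          have key : ∀ S : Submodule (RingA F) N, S = C' → Nonempty ((↥S ⧸ Submodule.comap S.subtype C) ≃ₗ[RingA F]
              (RingA F ⧸ Ideal.span {u})) := by
            rintro S rfl; exact hiso
          exact key _ hcc00
        | succ j =>
          rw [← Fin.succ_castSucc]
          simp only [Fin.cases_succ]
          exact hccsteps j

lemma homogen (S : Submodule (RingA F) N) (hfg : S.FG)
    (hSgr : ∀ n : ℤ, ∀ x ∈ S, ((DirectSum.decompose ℳ x n : ℳ n) : N) ∈ S) :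
    ∃ G : Finset N, (∀ w ∈ G, w ∈ S) ∧ (∀ w ∈ G, ∃ d : ℤ, w ∈ ℳ d) ∧
      S = Submodule.span (RingA F) (G : Set N) := by
  classical
  obtain ⟨s, hs⟩ := hfg
  refine ⟨s.biUnion (fun w => (DirectSum.decompose ℳ w).support.image
    (fun n => ((DirectSum.decompose ℳ w n : ℳ n) : N))), ?_, ?_, ?_⟩
  · intro w hw
    simp only [Finset.mem_biUnion, Finset.mem_image] at hw
    obtain ⟨x, hx, n, _, rfl⟩ := hw
    exact hSgr n x (hs ▸ Submodule.subset_span hx)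
  · intro w hw
    simp only [Finset.mem_biUnion, Finset.mem_image] at hw
    obtain ⟨x, hx, n, _, rfl⟩ := hw
    exact ⟨n, (DirectSum.decompose ℳ x n).2⟩
  · apply le_antisymm
    · rw [← hs]
      apply Submodule.span_le.mpr
      intro w hw
      have hwS : w ∈ S := hs ▸ Submodule.subset_span hw
      have := DirectSum.sum_support_decompose ℳ w
      rw [← this] at *
      apply Submodule.sum_mem
      intro n hn
      apply Submodule.subset_span
      simp only [Finset.coe_biUnion, Set.mem_iUnion, Finset.mem_coe, Finset.mem_image]
      exact ⟨w, hw, n, hn, rfl⟩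
    · apply Submodule.span_le.mpr
      intro w hw
      simp only [Finset.coe_biUnion, Set.mem_iUnion, Finset.mem_coe, Finset.mem_image] at hw
      obtain ⟨x, hx, n, _, rfl⟩ := hw
      exact hSgr n x (hs ▸ Submodule.subset_span hx)


end Mod

lemma chainConcat {β : Type*} [Preorder β] {t₁ t₂ : ℕ}
    (c₁ : Fin (t₁ + 1) → β) (c₂ : Fin (t₂ + 1) → β)
    (Q : β → β → Prop) (R : β → Prop)
    (h₁ : Monotone c₁) (h₂ : Monotone c₂) (hmid : c₁ (Fin.last t₁) = c₂ 0)
    (hR₁ : ∀ j, R (c₁ j)) (hR₂ : ∀ j, R (c₂ j))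
    (hQ₁ : ∀ i : Fin t₁, Q (c₁ i.castSucc) (c₁ i.succ))
    (hQ₂ : ∀ i : Fin t₂, Q (c₂ i.castSucc) (c₂ i.succ)) :
    ∃ (t : ℕ) (c : Fin (t + 1) → β), Monotone c ∧ c 0 = c₁ 0 ∧
      c (Fin.last t) = c₂ (Fin.last t₂) ∧ (∀ j, R (c j)) ∧
      ∀ i : Fin t, Q (c i.castSucc) (c i.succ) := by
  classical
  set c : Fin (t₁ + t₂ + 1) → β := fun j => if h : (j : ℕ) ≤ t₁ then c₁ ⟨j, by omega⟩
    else c₂ ⟨(j : ℕ) - t₁, by omega⟩ with hc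
  have key1 : ∀ (j : Fin (t₁ + t₂ + 1)) (h : (j : ℕ) ≤ t₁), c j = c₁ ⟨j, by omega⟩ := by
    intro j h; simp only [hc, dif_pos h]
  have key2 : ∀ (j : Fin (t₁ + t₂ + 1)) (h : t₁ ≤ (j : ℕ)),
      c j = c₂ ⟨(j : ℕ) - t₁, by omega⟩ := by
    intro j h
    by_cases h' : (j : ℕ) ≤ t₁
    · have hj : (j : ℕ) = t₁ := le_antisymm h' h
      rw [key1 j h']
      have e1 : (⟨(j : ℕ), by omega⟩ : Fin (t₁ + 1)) = Fin.last t₁ := by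
        apply Fin.ext; simp [hj]
      have e2 : (⟨(j : ℕ) - t₁, by omega⟩ : Fin (t₂ + 1)) = 0 := by
        apply Fin.ext; simp [hj]
      rw [e1, e2, hmid]
    · simp only [hc, dif_neg h']
  have hstep : ∀ i : Fin (t₁ + t₂),
      (∃ _ : (i : ℕ) + 1 ≤ t₁, c i.castSucc = c₁ ⟨(i : ℕ), by omega⟩ ∧
        c i.succ = c₁ ⟨(i : ℕ) + 1, by omega⟩) ∨
      (∃ _ : t₁ ≤ (i : ℕ), c i.castSucc = c₂ ⟨(i : ℕ) - t₁, by have := i.isLt; omega⟩ ∧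
        c i.succ = c₂ ⟨(i : ℕ) + 1 - t₁, by have := i.isLt; omega⟩) := by
    intro i
    have hil := i.isLt
    by_cases hi : (i : ℕ) + 1 ≤ t₁
    · left
      refine ⟨hi, ?_, ?_⟩
      · rw [key1 i.castSucc (by simp only [Fin.coe_castSucc]; omega)]
        congr 1
      · rw [key1 i.succ (by simp only [Fin.val_succ]; omega)]
        congr 1
    · right
      refine ⟨by omega, ?_, ?_⟩
      · rw [key2 i.castSucc (by simp only [Fin.coe_castSucc]; omega)]
        congr 1
      · rw [key2 i.succ (by simp only [Fin.val_succ]; omega)]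
        congr 1
  refine ⟨t₁ + t₂, c, ?_, ?_, ?_, ?_, ?_⟩
  · rw [Fin.monotone_iff_le_succ]
    intro i
    rcases hstep i with ⟨hi, e1, e2⟩ | ⟨hi, e1, e2⟩
    · rw [e1, e2]; exact h₁ (by rw [Fin.le_def]; simp)
    · rw [e1, e2]; exact h₂ (by rw [Fin.le_def]; simp; omega)
  · rw [key1 0 (by simp)]
    congr 1
  · rw [key2 (Fin.last (t₁ + t₂)) (by simp)]
    congr 1
    apply Fin.ext; simp
  · intro j
    by_cases h : (j : ℕ) ≤ t₁
    · rw [key1 j h]; exact hR₁ _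
    · rw [key2 j (by omega)]; exact hR₂ _
  · intro i
    have hil := i.isLt
    rcases hstep i with ⟨hi, e1, e2⟩ | ⟨hi, e1, e2⟩
    · rw [e1, e2]
      have := hQ₁ ⟨(i : ℕ), by omega⟩
      convert this using 2 <;> apply Fin.ext <;> simp
    · rw [e1, e2]
      have := hQ₂ ⟨(i : ℕ) - t₁, by omega⟩
      convert this using 2 <;> apply Fin.ext <;> simp <;> omega
end Aux

/-
STATEMENT 8: Let `F` be a field and `A = F[y,z]/(yz)`.  Let `N` be a
finitely generated graded `A`-module which is Cohen–Macaulay of dimension 1.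
Then `N` admits a finite filtration `0 = N₀ ⊂ N₁ ⊂ ... ⊂ N_t = N` by graded
submodules such that each successive quotient `N_{i+1}/N_i` is isomorphic,
up to a shift of grading, to `A/(y)` or `A/(z)`.

Here a grading of `N` is a direct sum decomposition `ℳ : ℤ → Submodule F N`
with `y · ℳ n ⊆ ℳ (n+1)` and `z · ℳ n ⊆ ℳ (n+1)`; "Cohen–Macaulay of
dimension 1" is taken in its equivalent form (for finitely generated graded
modules over this 1-dimensional ring, cf. the context): `N ≠ 0` and `N` has
no nonzero submodule that is finite-dimensional over `F` (depth ≥ 1), while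
`dim N ≤ 1` is automatic.  "Isomorphic up to a shift of grading" in
particular gives an isomorphism of the underlying `A`-modules, which is how
we state the conclusion (a shift of grading does not change the underlying
`A`-module). -/
theorem stmt8
    (N : Type) [AddCommGroup N] [Module F N] [Module (RingA F) N]
    [IsScalarTower F (RingA F) N]
    (ℳ : ℤ → Submodule F N) [DirectSum.Decomposition ℳ]
    (hgy : ∀ (n : ℤ), ∀ x ∈ ℳ n, yA F • x ∈ ℳ (n + 1))
    (hgz : ∀ (n : ℤ), ∀ x ∈ ℳ n, zA F • x ∈ ℳ (n + 1))
    [Module.Finite (RingA F) N] [Nontrivial N]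
    (hCM : ∀ S : Submodule (RingA F) N,
      Module.Finite F ↥(S.restrictScalars F) → S = ⊥) :
    ∃ (t : ℕ) (c : Fin (t + 1) → Submodule (RingA F) N),
      Monotone c ∧ c 0 = ⊥ ∧ c (Fin.last t) = ⊤ ∧
      (∀ j : Fin (t + 1), ∀ (n : ℤ), ∀ x ∈ c j,
        ((DirectSum.decompose ℳ x n : ℳ n) : N) ∈ c j) ∧
      (∀ i : Fin t,
        Nonempty ((↥(c i.succ) ⧸
            Submodule.comap (c i.succ).subtype (c i.castSucc)) ≃ₗ[RingA F]
          (RingA F ⧸ Ideal.span {yA F})) ∨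
        Nonempty ((↥(c i.succ) ⧸
            Submodule.comap (c i.succ).subtype (c i.castSucc)) ≃ₗ[RingA F]
          (RingA F ⧸ Ideal.span {zA F}))) := by
  classical
  have yz0 : yA F * zA F = 0 := yz_zero F
  have zy0 : zA F * yA F = 0 := by rw [mul_comm]; exact yz0
  have huv_yz : ∀ x : N, yA F • zA F • x = 0 := by
    intro x; rw [← mul_smul, yz0]; exact zero_smul (RingA F) x
  have huv_zy : ∀ x : N, zA F • yA F • x = 0 := by
    intro x; rw [← mul_smul, zy0]; exact zero_smul (RingA F) x
  have hsp_yz := span_pows F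
  have hsp_zy : ∀ a : RingA F, a ∈ Submodule.span F
      (Set.range (fun k : ℕ => zA F ^ k) ∪ Set.range (fun k : ℕ => yA F ^ k)) := by
    intro a; rw [Set.union_comm]; exact hsp_yz a
  have hspd_yz := spanA_decomp (yA F) (zA F) hsp_yz
  have hspd_zy := spanA_decomp (zA F) (yA F) hsp_zy
  have htriv : ∀ x : N, yA F • x = 0 → zA F • x = 0 → x = 0 := by
    intro x hy hz
    have hspanx : (Submodule.span (RingA F) {x}).restrictScalars F = Submodule.span F {x} := by
      apply le_antisymm
      · intro w hw
        obtain ⟨a, rfl⟩ := Submodule.mem_span_singleton.mp hw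
        clear hw
        have ha := hsp_yz a
        induction ha using Submodule.span_induction with
        | mem b hb =>
          rcases hb with ⟨k, rfl⟩ | ⟨k, rfl⟩
          · cases k with
            | zero => simpa using Submodule.mem_span_singleton_self x
            | succ k =>
              show yA F ^ (k + 1) • x ∈ _
              rw [pow_succ, mul_smul, hy, smul_zero]
              exact Submodule.zero_mem _
          · cases k with
            | zero => simpa using Submodule.mem_span_singleton_self x
            | succ k =>
              show zA F ^ (k + 1) • x ∈ _
              rw [pow_succ, mul_smul, hz, smul_zero]
              exact Submodule.zero_mem _
        | zero => convert Submodule.zero_mem (F ∙ x) using 1; exact zero_smul (RingA F) x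
        | add a b ha hb iha ihb => rw [add_smul]; exact Submodule.add_mem _ iha ihb
        | smul μ a ha ih => rw [smul_assoc]; exact Submodule.smul_mem _ μ ih
      · rw [Submodule.span_le]
        intro w hw
        rw [Set.mem_singleton_iff] at hw
        subst hw
        exact Submodule.mem_span_singleton_self w
    have hfin : Module.Finite F ↥((Submodule.span (RingA F) {x}).restrictScalars F) := by
      rw [hspanx]
      infer_instance
    have hbot := hCM _ hfin
    have hx := Submodule.mem_span_singleton_self x (R := RingA F)
    rw [hbot] at hx
    exact (Submodule.mem_bot _).mp hx
  set M : Submodule (RingA F) N := LinearMap.ker (LinearMap.lsmul (RingA F) N (yA F)) with hM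
  have hMmem : ∀ x : N, x ∈ M ↔ yA F • x = 0 := by
    intro x
    rw [hM, LinearMap.mem_ker, LinearMap.lsmul_apply]
  have Mgr : ∀ m : ℤ, ∀ x ∈ M, ((DirectSum.decompose ℳ x m : ℳ m) : N) ∈ M := by
    intro m x hx
    rw [hMmem] at hx ⊢
    rw [← decompose_smul_comm ℳ hgy m x, hx, DirectSum.decompose_zero]
    simp
  have hNoeth : IsNoetherian (RingA F) N := by
    have : IsNoetherianRing (RingA F) := by infer_instance
    infer_instance
  have hMfg : M.FG := IsNoetherian.noetherian M
  obtain ⟨G₁, hG₁S, hG₁hom, hG₁span⟩ := homogen ℳ M hMfg Mgr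
  have hTfg : (⊤ : Submodule (RingA F) N).FG := Module.finite_def.mp inferInstance
  obtain ⟨G₂, hG₂S, hG₂hom, hG₂span⟩ := homogen ℳ ⊤ hTfg (fun _ _ _ => Submodule.mem_top)
  obtain ⟨t₁, c₁, hm₁, h0₁, hl₁, hg₁, hs₁⟩ :=
    bigW ℳ (yA F) (zA F) huv_yz hgy hgz hsp_yz hspd_yz G₁.card ⊥ M G₁ rfl bot_le
      (fun m x hx => by
        rw [Submodule.mem_bot] at hx
        subst hx
        rw [DirectSum.decompose_zero]
        simp)
      (fun x hx => by rw [Submodule.mem_bot]; exact (hMmem x).mp hx)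
      (fun x hx hz => by
        rw [Submodule.mem_bot] at hz ⊢
        exact htriv x ((hMmem x).mp hx) hz)
      (fun w hw => hG₁S w hw)
      (fun w hw => hG₁hom w hw)
      (by rw [bot_sup_eq]; exact hG₁span)
  obtain ⟨t₂, c₂, hm₂, h0₂, hl₂, hg₂, hs₂⟩ :=
    bigW ℳ (zA F) (yA F) huv_zy hgz hgy hsp_zy hspd_zy G₂.card M ⊤ G₂ rfl le_top Mgr
      (fun x _ => by rw [hMmem]; exact huv_yz x)
      (fun x _ hyx => by
        rw [hMmem] at hyx ⊢
        exact htriv (yA F • x) hyx (huv_zy x))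
      (fun w _ => Submodule.mem_top)
      (fun w hw => hG₂hom w hw)
      (le_antisymm (by rw [hG₂span]; exact le_sup_right) le_top)
  have hmid : c₁ (Fin.last t₁) = c₂ 0 := by rw [hl₁, h0₂]
  obtain ⟨t, c, hmono, hc0, hclast, hRall, hQall⟩ :=
    chainConcat c₁ c₂
      (fun S T =>
        Nonempty ((↥T ⧸ Submodule.comap T.subtype S) ≃ₗ[RingA F]
          (RingA F ⧸ Ideal.span {yA F})) ∨
        Nonempty ((↥T ⧸ Submodule.comap T.subtype S) ≃ₗ[RingA F]
          (RingA F ⧸ Ideal.span {zA F})))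
      (fun S => ∀ m : ℤ, ∀ x ∈ S, ((DirectSum.decompose ℳ x m : ℳ m) : N) ∈ S)
      hm₁ hm₂ hmid hg₁ hg₂ (fun i => Or.inl (hs₁ i)) (fun i => Or.inr (hs₂ i))
  exact ⟨t, c, hmono, by rw [hc0, h0₁], by rw [hclast, hl₂], hRall, hQall⟩

end
end
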